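/- Let f_c ∈ G be the indicator function of corollas (the leaf together with, for each n ≥ 1, the tree whose root has n+1 children, all leaves), and let g_c ∈ G be defined by g_c(t) = (−1)^{i(t)}, where i(t) is the number of internal nodes of t. Then f_c∘g_c = e; that is, the alternating sum of all Schröder trees is the compositional inverse of the series of corollas in the group of the Schröder operad. -/

import Mathlib

inductive PTree : Type where
  | node : List PTree → PTree

mutual
  def leavesT : PTree → ℕ
    | .node [] => 1
    | .node (t :: ts) => leavesT t + leavesL ts
  def leavesL : List PTree → ℕ
    | [] => 0
    | t :: ts => leavesT t + leavesL ts
end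

inductive Reduced : PTree → Prop where
  | leaf : Reduced (.node [])
  | node : ∀ ts : List PTree, 2 ≤ ts.length → (∀ t ∈ ts, Reduced t) → Reduced (.node ts)

mutual
  /-- Replace the leaves of a tree, from left to right, by the trees of a list;
  returns the resulting tree together with the unused trees of the list. -/
  def graftT : PTree → List PTree → PTree × List PTree
    | .node [], l => (l.headD (.node []), l.tail)
    | .node (c :: cs), l =>
        let p := graftL (c :: cs) l
        (.node p.1, p.2)
  def graftL : List PTree → List PTree → List PTree × List PTree
    | [], l => ([], l)
    | c :: cs, l =>
        let p := graftT c l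
        let q := graftL cs p.2
        (p.1 :: q.1, q.2)
end

/-- Schröder trees. -/
def SchT : Type := {t : PTree // Reduced t}

def leafST : SchT := ⟨.node [], Reduced.leaf⟩

/-- Decompositions `t = t₀ ∘ (t₁, …, t_n)` of a Schröder tree, where `t₀` has `n`
leaves. -/
def Decomps (t : SchT) : Set (SchT × List SchT) :=
  {p | (p.2.map Subtype.val).length = leavesT p.1.val ∧
    (graftT p.1.val (p.2.map Subtype.val)).1 = t.val}

/-- The composition product of the group of the Schröder operad:
`(f∘g)(t) = Σ f(t₀)·g(t₁)⋯g(t_n)` over all decompositions `t = t₀∘(t₁,…,t_n)`. -/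
noncomputable def compG (f g : SchT → ℚ) : SchT → ℚ :=
  fun t => ∑ᶠ p ∈ Decomps t, f p.1 * (p.2.map g).prod

/-- `(f⊣g)(t) = Σ f(t₀)·g(t₁)⋯g(t_{n−1})` over decompositions whose last entry is
the leaf. -/
noncomputable def ldash (f g : SchT → ℚ) : SchT → ℚ :=
  fun t => ∑ᶠ p ∈ {p | p ∈ Decomps t ∧ p.2.getLast? = some leafST},
    f p.1 * (p.2.dropLast.map g).prod

/-- `(f⊢g)(t) = Σ f(t₀)·g(t_n)` over decompositions whose entries `t₁,…,t_{n−1}`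
are all leaves. -/
noncomputable def rdash (f g : SchT → ℚ) : SchT → ℚ :=
  fun t => ∑ᶠ p ∈ {p | p ∈ Decomps t ∧ ∀ s ∈ p.2.dropLast, s = leafST},
    f p.1 * g (p.2.getLastD leafST)

/-- The identity element: the indicator function of the leaf. -/
def eG : SchT → ℚ := fun t =>
  match t.val with
  | .node [] => 1
  | _ => 0

mutual
  def inodesT : PTree → ℕ
    | .node [] => 0
    | .node (t :: ts) => 1 + inodesT t + inodesL ts
  def inodesL : List PTree → ℕ
    | [] => 0
    | t :: ts => inodesT t + inodesL ts
end

/-- A corolla: all child subtrees of the root are leaves (the leaf itself is the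
corolla with `ts = []`). -/
def IsCorolla (t : PTree) : Prop :=
  ∃ ts : List PTree, t = .node ts ∧ ∀ s ∈ ts, s = PTree.node []

open Classical in
/-- The series of corollas. -/
noncomputable def fc : SchT → ℚ := fun t => if IsCorolla t.val then 1 else 0

/-- The alternating sum of all Schröder trees: `g_c(t) = (−1)^{i(t)}`. -/
noncomputable def gc : SchT → ℚ := fun t => (-1 : ℚ) ^ (inodesT t.val)

/-!
If `t₀` is a corolla, a decomposition `t = t₀ ∘ (t₁, …, t_n)` is either the trivial one
`leaf ∘ (t)` or, when `t` is not the leaf, the splitting of `t` at its root into the corolla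
of the same arity and the root subtrees of `t`. Hence `(f_c ∘ g)(t) = g(t) + ∏ g(tᵢ)` over the
root subtrees `tᵢ`, and `g_c(t) = -∏ g_c(tᵢ)` since the root is the only internal node of `t`
outside its root subtrees.
-/

section PTree

variable {cs : List PTree}

lemma leavesL_of_forall_eq_leaf (hcs : ∀ s ∈ cs, s = .node []) : leavesL cs = cs.length := by
  induction cs with
  | nil => rfl
  | cons c cs ih =>
    rw [leavesL, hcs c List.mem_cons_self, ih fun s hs => hcs s (List.mem_cons_of_mem c hs)]
    simp [leavesT, Nat.add_comm]

lemma leavesT_node_of_forall_eq_leaf (hne : cs ≠ []) (hcs : ∀ s ∈ cs, s = .node []) :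
    leavesT (.node cs) = cs.length := by
  obtain ⟨c, cs', rfl⟩ := List.exists_cons_of_ne_nil hne
  exact leavesL_of_forall_eq_leaf hcs

lemma graftL_of_forall_eq_leaf (hcs : ∀ s ∈ cs, s = .node []) {l : List PTree}
    (hl : l.length = cs.length) : graftL cs l = (l, []) := by
  induction cs generalizing l with
  | nil => simp_all [graftL]
  | cons c cs ih =>
    obtain ⟨x, xs, rfl⟩ := List.exists_cons_of_length_eq_add_one hl
    rw [graftL, hcs c List.mem_cons_self]
    simp only [graftT, List.headD_cons, List.tail_cons]
    rw [ih (fun s hs => hcs s (List.mem_cons_of_mem c hs)) (by simpa using hl)]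

lemma graftT_node_of_forall_eq_leaf (hne : cs ≠ []) (hcs : ∀ s ∈ cs, s = .node [])
    {l : List PTree} (hl : l.length = cs.length) : graftT (.node cs) l = (.node l, []) := by
  obtain ⟨c, cs', rfl⟩ := List.exists_cons_of_ne_nil hne
  rw [graftT, graftL_of_forall_eq_leaf hcs hl]

lemma inodesT_node_of_ne_nil (hne : cs ≠ []) : inodesT (.node cs) = inodesL cs + 1 := by
  obtain ⟨c, cs', rfl⟩ := List.exists_cons_of_ne_nil hne
  simp only [inodesT, inodesL]
  omega

end PTree

def nodeST (us : List PTree) (h2 : 2 ≤ us.length) (hall : ∀ s ∈ us, Reduced s) : SchT :=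
  ⟨.node us, .node us h2 hall⟩

def childrenST (us : List PTree) (hall : ∀ s ∈ us, Reduced s) : List SchT :=
  us.pmap Subtype.mk hall

lemma map_val_childrenST {us : List PTree} (hall : ∀ s ∈ us, Reduced s) :
    (childrenST us hall).map Subtype.val = us :=
  (List.map_pmap hall).trans ((List.pmap_eq_map hall).trans us.map_id)

-- `SchT` is not reducible, so `List.length_map` does not rewrite `l.map Subtype.val` for
-- `l : List SchT`.
lemma length_map_val (l : List SchT) : (l.map Subtype.val).length = l.length :=
  List.length_map _

def corollaST (n : ℕ) (hn : 2 ≤ n) : SchT :=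
  ⟨.node (List.replicate n (.node [])), .node _ (by simpa using hn)
    fun _ hs => List.eq_of_mem_replicate hs ▸ .leaf⟩

lemma mem_decomps_leafST_iff {t : SchT} {l : List SchT} :
    (leafST, l) ∈ Decomps t ↔ l = [t] := by
  constructor
  · rintro ⟨hlen, hgraft⟩
    have hlen : l.length = 1 := (length_map_val l).symm.trans hlen
    obtain ⟨s, rfl⟩ := List.length_eq_one_iff.mp hlen
    exact congrArg (· :: []) (Subtype.ext hgraft)
  · rintro rfl
    exact ⟨rfl, rfl⟩

lemma mem_decomps_of_forall_eq_leaf {t₀ : SchT} {cs : List PTree} (ht₀ : t₀.val = .node cs)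
    (hne : cs ≠ []) (hcs : ∀ s ∈ cs, s = .node []) {t : SchT} {l : List SchT} :
    (t₀, l) ∈ Decomps t ↔ l.length = cs.length ∧ t.val = .node (l.map Subtype.val) := by
  show (l.map Subtype.val).length = leavesT t₀.val ∧ _ ↔ _
  rw [length_map_val, ht₀, leavesT_node_of_forall_eq_leaf hne hcs]
  constructor
  · rintro ⟨hlen, hgraft⟩
    rw [graftT_node_of_forall_eq_leaf hne hcs ((length_map_val l).trans hlen)] at hgraft
    exact ⟨hlen, hgraft.symm⟩
  · rintro ⟨hlen, ht⟩
    rw [graftT_node_of_forall_eq_leaf hne hcs ((length_map_val l).trans hlen), ht]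
    exact ⟨hlen, rfl⟩

lemma decomps_leafST_inter_corolla :
    Decomps leafST ∩ {p | IsCorolla p.1.val} = {(leafST, [leafST])} := by
  ext ⟨t₀, l⟩
  simp only [Set.mem_inter_iff, Set.mem_ofPred_eq, Set.mem_singleton_iff, Prod.mk.injEq]
  constructor
  · rintro ⟨hd, cs, ht₀, hcs⟩
    obtain rfl | hne := eq_or_ne cs []
    · obtain rfl : t₀ = leafST := Subtype.ext ht₀
      exact ⟨rfl, mem_decomps_leafST_iff.mp hd⟩
    · obtain ⟨hlen, ht⟩ := (mem_decomps_of_forall_eq_leaf ht₀ hne hcs).mp hd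
      obtain rfl : l = [] := List.map_eq_nil_iff.mp (PTree.node.inj ht).symm
      exact absurd hlen.symm (List.length_pos_iff.mpr hne).ne'
  · rintro ⟨rfl, rfl⟩
    exact ⟨mem_decomps_leafST_iff.mpr rfl, [], rfl, by simp⟩

lemma decomps_nodeST_inter_corolla (us : List PTree) (h2 : 2 ≤ us.length)
    (hall : ∀ s ∈ us, Reduced s) :
    Decomps (nodeST us h2 hall) ∩ {p | IsCorolla p.1.val} =
      {(leafST, [nodeST us h2 hall]), (corollaST us.length h2, childrenST us hall)} := by
  ext ⟨t₀, l⟩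
  simp only [Set.mem_inter_iff, Set.mem_ofPred_eq, Set.mem_insert_iff, Set.mem_singleton_iff,
    Prod.mk.injEq]
  constructor
  · rintro ⟨hd, cs, ht₀, hcs⟩
    obtain rfl | hne := eq_or_ne cs []
    · obtain rfl : t₀ = leafST := Subtype.ext ht₀
      exact Or.inl ⟨rfl, mem_decomps_leafST_iff.mp hd⟩
    · obtain ⟨hlen, ht⟩ := (mem_decomps_of_forall_eq_leaf ht₀ hne hcs).mp hd
      have hl : l.map Subtype.val = us := (PTree.node.inj ht).symm
      have hlen' : cs.length = us.length := by rw [← hlen, ← hl, length_map_val]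
      refine Or.inr ⟨Subtype.ext ?_, List.map_injective_iff.mpr Subtype.val_injective ?_⟩
      · rw [ht₀, List.eq_replicate_iff.mpr ⟨hlen', hcs⟩]
        rfl
      · rw [hl, map_val_childrenST]
  · have hcorolla : ∀ s ∈ List.replicate us.length (PTree.node []), s = .node [] :=
      fun _ => List.eq_of_mem_replicate
    rintro (⟨rfl, rfl⟩ | ⟨rfl, rfl⟩)
    · exact ⟨mem_decomps_leafST_iff.mpr rfl, [], rfl, by simp⟩
    · refine ⟨(mem_decomps_of_forall_eq_leaf rfl ?_ hcorolla).mpr ⟨?_, ?_⟩, _, rfl, hcorolla⟩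
      · simpa using (by omega : us.length ≠ 0)
      · rw [← length_map_val, map_val_childrenST, List.length_replicate]
      · rw [map_val_childrenST]
        rfl

lemma compG_fc_eq_finsum_corolla (g : SchT → ℚ) (t : SchT) :
    compG fc g t = ∑ᶠ p ∈ Decomps t ∩ {p | IsCorolla p.1.val}, (p.2.map g).prod := by
  classical
  have hfc : (fun p : SchT × List SchT => fc p.1 * (p.2.map g).prod) =
      Set.indicator {p | IsCorolla p.1.val} fun p => (p.2.map g).prod := by
    ext p
    by_cases hp : IsCorolla p.1.val <;> simp [fc, hp]
  simp only [compG]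
  rw [finsum_mem_def, hfc, Set.indicator_indicator, ← finsum_mem_def]

lemma compG_fc_leafST (g : SchT → ℚ) : compG fc g leafST = g leafST := by
  rw [compG_fc_eq_finsum_corolla, decomps_leafST_inter_corolla, finsum_mem_singleton]
  simp

lemma compG_fc_nodeST (g : SchT → ℚ) (us : List PTree) (h2 : 2 ≤ us.length)
    (hall : ∀ s ∈ us, Reduced s) :
    compG fc g (nodeST us h2 hall) =
      g (nodeST us h2 hall) + ((childrenST us hall).map g).prod := by
  have hne : (leafST, [nodeST us h2 hall]) ≠ (corollaST us.length h2, childrenST us hall) := by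
    intro h
    have := congrArg List.length (PTree.node.inj (congrArg (·.1.val) h))
    simp only [List.length_nil, List.length_replicate] at this
    omega
  rw [compG_fc_eq_finsum_corolla, decomps_nodeST_inter_corolla, finsum_mem_pair hne]
  simp

lemma prod_map_gc_childrenST {us : List PTree} (hall : ∀ s ∈ us, Reduced s) :
    ((childrenST us hall).map gc).prod = (-1) ^ inodesL us := by
  induction us with
  | nil => rfl
  | cons u us ih =>
    rw [inodesL, pow_add, ← ih fun s hs => hall s (List.mem_cons_of_mem u hs)]
    rfl

lemma gc_nodeST (us : List PTree) (h2 : 2 ≤ us.length) (hall : ∀ s ∈ us, Reduced s) :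
    gc (nodeST us h2 hall) = -((childrenST us hall).map gc).prod := by
  show (-1 : ℚ) ^ inodesT (.node us) = _
  rw [prod_map_gc_childrenST, inodesT_node_of_ne_nil (List.ne_nil_of_length_pos (by omega)),
    pow_succ]
  ring

lemma eG_nodeST (us : List PTree) (h2 : 2 ≤ us.length) (hall : ∀ s ∈ us, Reduced s) :
    eG (nodeST us h2 hall) = 0 := by
  obtain ⟨u, us', rfl⟩ := List.exists_cons_of_length_pos (by omega : 0 < us.length)
  rfl

/-- `f_c ∘ g_c = e`: the alternating sum of all Schröder trees is
the compositional inverse of the series of corollas in the group of the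
Schröder operad. -/
theorem stmt12 : compG fc gc = eG := by
  funext ⟨t, ht⟩
  cases ht with
  | leaf => exact (compG_fc_leafST gc).trans (pow_zero (-1 : ℚ))
  | node us h2 hall =>
    show compG fc gc (nodeST us h2 hall) = eG (nodeST us h2 hall)
    rw [compG_fc_nodeST, gc_nodeST, neg_add_cancel, eG_nodeST]
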